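/- (Quadratic variation under C¹ transformation / log) Let S : [0,∞) → (0,∞) be continuous with continuous quadratic variation [S] along grids (T_N). Then log S admits a continuous quadratic variation along (T_N) and [log S]_t = ∫_0^t S_s^{-2} d[S]_s for all t ≥ 0. -/

import Mathlib

/-!
For nonnegative weights `w_N` whose grid sums converge pointwise to a continuous `Q`, the weighted
sums `∑ f(t_i) w_N(t_i, t_{i+1})` with `f` continuous are Cauchy: once the mesh is small they are
uniformly close to a Riemann–Stieltjes sum `∑ f(r_j) (Q(r_{j+1}) - Q(r_j))` on a fixed partition
finer than the modulus of uniform continuity of `f`. Interleaving two weight families with the same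
`Q` shows that the limit depends only on `f` and `Q`; for `f = S⁻²` the weights `(ΔS)²` and `Δ[S]`
therefore give the same limit `[log S]`, and it is continuous since `|Δ[log S]| ≤ C |Δ[S]|` locally.
Finally `(Δ log S)² = S⁻² (ΔS)² (1 + O(|ΔS|))` uniformly on compacts, where `S` is bounded below,
so the grid sums of `(Δ log S)²` have the same limit.
-/

open Filter Topology Set MeasureTheory

/-- A refining sequence of time grids: each grid is a strictly increasing
sequence starting at 0 and tending to infinity; grids are nested and the
mesh tends to zero. -/
structure GridSeq where
  T : ℕ → ℕ → ℝ
  zero : ∀ N, T N 0 = 0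
  mono : ∀ N, StrictMono (T N)
  unbounded : ∀ N, Filter.Tendsto (T N) Filter.atTop Filter.atTop
  nested : ∀ N, Set.range (T N) ⊆ Set.range (T (N + 1))
  mesh : ∀ ε > 0, ∃ N₀, ∀ N ≥ N₀, ∀ i, T N (i + 1) - T N i ≤ ε

/-- The grid sum `∑_{t_i, t_{i+1} ∈ τ, t_{i+1} ≤ t} f(t_i, t_{i+1})`. -/
noncomputable def gridSum (τ : ℕ → ℝ) (f : ℝ → ℝ → ℝ) (t : ℝ) : ℝ :=
  ∑' i : ℕ, if τ (i + 1) ≤ t then f (τ i) (τ (i + 1)) else 0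

/-- The grid sums of `f` along the grid sequence `G` converge to `L` at time `t`. -/
def ConvTo (G : GridSeq) (f : ℝ → ℝ → ℝ) (t L : ℝ) : Prop :=
  Filter.Tendsto (fun N => gridSum (G.T N) f t) Filter.atTop (nhds L)

/-- `X` has continuous quadratic variation `Q` along the grid sequence `G`. -/
def HasQV (G : GridSeq) (X Q : ℝ → ℝ) : Prop :=
  ContinuousOn Q (Set.Ici 0) ∧ Q 0 = 0 ∧
    ∀ t, ConvTo G (fun u v => (X v - X u) ^ 2) t (Q t)

/-- `A` is locally of finite variation on `[0,∞)`. -/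
def LocBV (A : ℝ → ℝ) : Prop := ∀ T > 0, BoundedVariationOn A (Set.Icc 0 T)

/-- `ξ` is an admissible integrand for `X`: locally `ξ_t = g(A_t, X_t)` with
`g ∈ C¹` and `A` continuous of finite variation. -/
def Admissible (X ξ : ℝ → ℝ) : Prop :=
  ∀ T > 0, ∃ (n : ℕ) (g : (Fin n → ℝ) → ℝ → ℝ) (A : ℝ → Fin n → ℝ),
    ContDiff ℝ 1 (Function.uncurry g) ∧
    (∀ k, ContinuousOn (fun t => A t k) (Set.Icc 0 T) ∧
      BoundedVariationOn (fun t => A t k) (Set.Icc 0 T)) ∧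
    ∀ t ∈ Set.Icc (0 : ℝ) T, ξ t = g (A t) (X t)

lemma exists_tendsto_of_forall_eventually_abs_sub_le {a : ℕ → ℝ}
    (h : ∀ ε > 0, ∃ c, ∀ᶠ N in atTop, |a N - c| ≤ ε) : ∃ L, Tendsto a atTop (𝓝 L) := by
  refine cauchySeq_tendsto_of_complete (Metric.cauchySeq_iff'.2 fun ε hε => ?_)
  obtain ⟨c, hc⟩ := h (ε / 3) (by positivity)
  obtain ⟨N, hN⟩ := eventually_atTop.1 hc
  refine ⟨N, fun n hn => ?_⟩
  have hn := abs_le.1 (hN n hn)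
  have hN' := abs_le.1 (hN N le_rfl)
  rw [Real.dist_eq, abs_sub_lt_iff]
  constructor <;> linarith

lemma tendsto_two_mul_atTop : Tendsto (fun n : ℕ => 2 * n) atTop atTop :=
  tendsto_id.const_mul_atTop' two_pos

lemma tendsto_two_mul_add_one_atTop : Tendsto (fun n : ℕ => 2 * n + 1) atTop atTop :=
  tendsto_atTop_mono (fun _ => Nat.le_succ _) tendsto_two_mul_atTop

lemma tendsto_of_tendsto_two_mul_of_tendsto_two_mul_add_one {α : Type*} {a : ℕ → α}
    {l : Filter α} (he : Tendsto (fun n => a (2 * n)) atTop l)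
    (ho : Tendsto (fun n => a (2 * n + 1)) atTop l) : Tendsto a atTop l := by
  intro s hs
  obtain ⟨N₁, h₁⟩ := eventually_atTop.1 (he hs)
  obtain ⟨N₂, h₂⟩ := eventually_atTop.1 (ho hs)
  refine eventually_atTop.2 ⟨2 * (N₁ + N₂), fun n hn => ?_⟩
  obtain ⟨m, rfl | rfl⟩ := Nat.even_or_odd' n
  · exact h₁ m (by omega)
  · exact h₂ m (by omega)

lemma abs_sub_sum_le_of_forall_lt {A W x : ℕ → ℝ} {η : ℝ} {k : ℕ}
    (h : ∀ j < k, |A (j + 1) - A j - x j * (W (j + 1) - W j)| ≤ η * (W (j + 1) - W j)) :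
    |A k - A 0 - ∑ j ∈ Finset.range k, x j * (W (j + 1) - W j)| ≤ η * (W k - W 0) := by
  induction k with
  | zero => simp
  | succ k ih =>
    calc _ = |(A k - A 0 - ∑ j ∈ Finset.range k, x j * (W (j + 1) - W j))
          + (A (k + 1) - A k - x k * (W (k + 1) - W k))| := by
          rw [Finset.sum_range_succ]; ring_nf
      _ ≤ η * (W k - W 0) + η * (W (k + 1) - W k) :=
          (abs_add_le _ _).trans (add_le_add (ih fun j hj => h j (by omega)) (h k (by omega)))
      _ = _ := by ring

def stieltjesSum (f Q : ℝ → ℝ) (r : ℕ → ℝ) (k : ℕ) : ℝ :=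
  ∑ j ∈ Finset.range k, f (r j) * (Q (r (j + 1)) - Q (r j))

namespace GridSeq

variable (G : GridSeq)

lemma T_nonneg (N i : ℕ) : 0 ≤ G.T N i :=
  G.zero N ▸ (G.mono N).monotone i.zero_le

lemma T_lt_succ (N i : ℕ) : G.T N i < G.T N (i + 1) :=
  G.mono N i.lt_succ_self

noncomputable def stepCount (N : ℕ) (t : ℝ) : ℕ :=
  Nat.find (((tendsto_add_atTop_iff_nat 1).2 (G.unbounded N)).eventually_gt_atTop t).exists

variable {G}

lemma lt_stepCount_iff {N i : ℕ} {t : ℝ} : i < G.stepCount N t ↔ G.T N (i + 1) ≤ t := by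
  rw [stepCount, Nat.lt_find_iff]
  exact ⟨fun h => not_lt.1 (h i le_rfl),
    fun h m hm => not_lt.2 (((G.mono N).monotone (by omega)).trans h)⟩

lemma stepCount_mono (N : ℕ) : Monotone (G.stepCount N) := fun _ _ hst =>
  not_lt.1 fun h => (lt_stepCount_iff.2 ((lt_stepCount_iff.1 h).trans hst)).false

lemma stepCount_eq_zero {N : ℕ} {t : ℝ} (ht : t ≤ 0) : G.stepCount N t = 0 := by
  by_contra h
  have := lt_stepCount_iff.1 (Nat.pos_of_ne_zero h)
  linarith [G.T_nonneg N 0, G.T_lt_succ N 0]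

lemma T_stepCount_le {N : ℕ} {t : ℝ} (ht : 0 ≤ t) : G.T N (G.stepCount N t) ≤ t := by
  rcases Nat.eq_zero_or_eq_succ_pred (G.stepCount N t) with h | h
  · rw [h, G.zero]; exact ht
  · rw [h]; exact lt_stepCount_iff.1 (by omega)

lemma lt_T_stepCount_succ (N : ℕ) (t : ℝ) : t < G.T N (G.stepCount N t + 1) :=
  not_le.1 fun h => (lt_stepCount_iff.2 h).false

lemma tendsto_T_stepCount {t : ℝ} (ht : 0 ≤ t) :
    Tendsto (fun N => G.T N (G.stepCount N t)) atTop (𝓝 t) := by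
  refine Metric.tendsto_atTop.2 fun ε hε => ?_
  obtain ⟨N₀, hN₀⟩ := G.mesh (ε / 2) (half_pos hε)
  refine ⟨N₀, fun N hN => ?_⟩
  rw [Real.dist_eq, abs_sub_lt_iff]
  constructor <;>
    linarith [hN₀ N hN (G.stepCount N t), T_stepCount_le (G := G) (N := N) ht,
      G.lt_T_stepCount_succ N t]

lemma mem_Ico_stepCount_iff {N i : ℕ} {s t : ℝ} :
    i ∈ Finset.Ico (G.stepCount N s) (G.stepCount N t) ↔ s < G.T N (i + 1) ∧ G.T N (i + 1) ≤ t := by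
  rw [Finset.mem_Ico, ← lt_stepCount_iff, ← not_lt, lt_stepCount_iff, not_le]

lemma gridSum_eq_sum_range (N : ℕ) (φ : ℝ → ℝ → ℝ) (t : ℝ) :
    gridSum (G.T N) φ t = ∑ i ∈ Finset.range (G.stepCount N t), φ (G.T N i) (G.T N (i + 1)) := by
  rw [gridSum, tsum_eq_sum (s := Finset.range (G.stepCount N t))]
  · exact Finset.sum_congr rfl fun i hi => if_pos (lt_stepCount_iff.1 (Finset.mem_range.1 hi))
  · exact fun i hi => if_neg fun h => hi (Finset.mem_range.2 (lt_stepCount_iff.2 h))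

lemma gridSum_of_nonpos (N : ℕ) (φ : ℝ → ℝ → ℝ) {t : ℝ} (ht : t ≤ 0) :
    gridSum (G.T N) φ t = 0 := by
  rw [gridSum_eq_sum_range, stepCount_eq_zero ht, Finset.sum_range_zero]

lemma gridSum_sub_gridSum (N : ℕ) (φ : ℝ → ℝ → ℝ) {s t : ℝ} (hst : s ≤ t) :
    gridSum (G.T N) φ t - gridSum (G.T N) φ s =
      ∑ i ∈ Finset.Ico (G.stepCount N s) (G.stepCount N t), φ (G.T N i) (G.T N (i + 1)) := by
  rw [gridSum_eq_sum_range, gridSum_eq_sum_range, Finset.sum_Ico_eq_sub _ (stepCount_mono N hst)]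

lemma gridSum_mono (N : ℕ) {φ : ℝ → ℝ → ℝ} (hφ : ∀ u v, u ≤ v → 0 ≤ φ u v) :
    Monotone (gridSum (G.T N) φ) := fun _ _ hst => by
  rw [← sub_nonneg, gridSum_sub_gridSum N φ hst]
  exact Finset.sum_nonneg fun i _ => hφ _ _ (G.T_lt_succ N i).le

lemma abs_gridSum_mul_sub_le (N : ℕ) {f : ℝ → ℝ} {w : ℝ → ℝ → ℝ}
    (hw : ∀ u v, u ≤ v → 0 ≤ w u v) {s t x η : ℝ} (hst : s ≤ t)
    (hf : ∀ i, s < G.T N (i + 1) → G.T N (i + 1) ≤ t → |f (G.T N i) - x| ≤ η) :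
    |gridSum (G.T N) (fun u v => f u * w u v) t - gridSum (G.T N) (fun u v => f u * w u v) s
        - x * (gridSum (G.T N) w t - gridSum (G.T N) w s)|
      ≤ η * (gridSum (G.T N) w t - gridSum (G.T N) w s) := by
  rw [gridSum_sub_gridSum N _ hst, gridSum_sub_gridSum N _ hst, Finset.mul_sum, Finset.mul_sum,
    ← Finset.sum_sub_distrib]
  refine (Finset.abs_sum_le_sum_abs _ _).trans (Finset.sum_le_sum fun i hi => ?_)
  obtain ⟨hsi, hit⟩ := mem_Ico_stepCount_iff.1 hi
  have hwi := hw _ _ (G.T_lt_succ N i).le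
  rw [← sub_mul, abs_mul, abs_of_nonneg hwi]
  exact mul_le_mul_of_nonneg_right (hf i hsi hit) hwi

lemma abs_gridSum_mul_sub_stieltjesSum_le (N : ℕ) {f : ℝ → ℝ} {w : ℝ → ℝ → ℝ}
    (hw : ∀ u v, u ≤ v → 0 ≤ w u v) {r : ℕ → ℝ} {k : ℕ} {δ η : ℝ}
    (hr0 : r 0 = 0) (hr : Monotone r) (hrδ : ∀ j, r (j + 1) - r j ≤ δ / 2)
    (hmesh : ∀ i, G.T N (i + 1) - G.T N i ≤ δ / 2)
    (hf : ∀ x ∈ Icc 0 (r k), ∀ y ∈ Icc 0 (r k), dist x y < δ → dist (f x) (f y) < η) :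
    |gridSum (G.T N) (fun u v => f u * w u v) (r k) - stieltjesSum f (gridSum (G.T N) w) r k|
      ≤ η * gridSum (G.T N) w (r k) := by
  have h := abs_sub_sum_le_of_forall_lt (η := η) (x := fun j => f (r j))
    (A := fun j => gridSum (G.T N) (fun u v => f u * w u v) (r j))
    (W := fun j => gridSum (G.T N) w (r j)) fun j hj =>
      abs_gridSum_mul_sub_le N hw (hr j.le_succ) fun i hri hir => by
        have hi : G.T N i ∈ Icc 0 (r k) :=
          ⟨G.T_nonneg N i, (G.T_lt_succ N i).le.trans (hir.trans (hr hj))⟩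
        have hj : r j ∈ Icc 0 (r k) := ⟨hr0 ▸ hr j.zero_le, hr hj.le⟩
        have hdist : dist (G.T N i) (r j) < δ := by
          rw [Real.dist_eq, abs_sub_lt_iff]
          constructor <;> linarith [hmesh i, hrδ j, G.T_lt_succ N i]
        simpa only [Real.dist_eq] using (hf _ hi _ hj hdist).le
  simpa only [stieltjesSum, hr0, gridSum_of_nonpos N _ le_rfl, sub_zero] using h

theorem exists_tendsto_gridSum_mul {f : ℝ → ℝ} (hf : ContinuousOn f (Ici 0))
    {w : ℕ → ℝ → ℝ → ℝ} (hw : ∀ N u v, u ≤ v → 0 ≤ w N u v) {Q : ℝ → ℝ}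
    (hQ : ∀ r, Tendsto (fun N => gridSum (G.T N) (w N) r) atTop (𝓝 (Q r))) (t : ℝ) :
    ∃ L, Tendsto (fun N => gridSum (G.T N) (fun u v => f u * w N u v) t) atTop (𝓝 L) := by
  rcases le_or_gt t 0 with ht | ht
  · exact ⟨0, by simpa only [gridSum_of_nonpos _ _ ht] using tendsto_const_nhds⟩
  refine exists_tendsto_of_forall_eventually_abs_sub_le fun ε hε => ?_
  set B := |Q t| + 1
  have hB0 : 0 < B := by positivity
  obtain ⟨δ, hδ, hfδ⟩ := Metric.uniformContinuousOn_iff.1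
    (isCompact_Icc.uniformContinuousOn_of_continuous (hf.mono (Icc_subset_Ici_self : Icc 0 t ⊆ _)))
    (ε / (2 * B)) (by positivity)
  obtain ⟨k, hk⟩ := exists_nat_gt (2 * t / δ)
  have hk0 : (0 : ℝ) < k := (by positivity : (0 : ℝ) < 2 * t / δ).trans hk
  set r : ℕ → ℝ := fun j => j * (t / k)
  have hrk : r k = t := by simp only [r]; field_simp
  have hrδ : ∀ j, r (j + 1) - r j ≤ δ / 2 := fun j => by
    have : t / k < δ / 2 := by rw [div_lt_iff₀ hk0]; rw [div_lt_iff₀ hδ] at hk; linarith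
    simp only [r]; push_cast; linarith
  have hr : Monotone r := fun i j hij => by simp only [r]; gcongr
  refine ⟨stieltjesSum f Q r k, ?_⟩
  have hmesh : ∀ᶠ N in atTop, ∀ i, G.T N (i + 1) - G.T N i ≤ δ / 2 :=
    eventually_atTop.2 (G.mesh _ (half_pos hδ))
  have hsum : ∀ᶠ N in atTop,
      dist (stieltjesSum f (gridSum (G.T N) (w N)) r k) (stieltjesSum f Q r k) < ε / 2 :=
    Metric.tendsto_nhds.1 (tendsto_finsetSum _ fun j _ =>
      ((hQ _).sub (hQ _)).const_mul _) _ (half_pos hε)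
  have hB : ∀ᶠ N in atTop, gridSum (G.T N) (w N) t < B :=
    (hQ t).eventually (gt_mem_nhds (by linarith [le_abs_self (Q t)]))
  filter_upwards [hmesh, hsum, hB] with N hmesh hsum hB
  have h := abs_gridSum_mul_sub_stieltjesSum_le N (hw N) (by simp [r]) hr hrδ hmesh
    (by rwa [hrk])
  rw [hrk] at h
  rw [Real.dist_eq] at hsum
  calc _ ≤ _ := abs_sub_le _ (stieltjesSum f (gridSum (G.T N) (w N)) r k) _
    _ ≤ ε / (2 * B) * B + ε / 2 := add_le_add (h.trans (by gcongr)) hsum.le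
    _ = ε := by field_simp; ring

theorem tendsto_gridSum_mul_of_tendsto {f : ℝ → ℝ} (hf : ContinuousOn f (Ici 0))
    {w w' : ℕ → ℝ → ℝ → ℝ} (hw : ∀ N u v, u ≤ v → 0 ≤ w N u v)
    (hw' : ∀ N u v, u ≤ v → 0 ≤ w' N u v) {Q : ℝ → ℝ}
    (hQ : ∀ r, Tendsto (fun N => gridSum (G.T N) (w N) r) atTop (𝓝 (Q r)))
    (hQ' : ∀ r, Tendsto (fun N => gridSum (G.T N) (w' N) r) atTop (𝓝 (Q r))) {t L : ℝ}
    (hL : Tendsto (fun N => gridSum (G.T N) (fun u v => f u * w N u v) t) atTop (𝓝 L)) :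
    Tendsto (fun N => gridSum (G.T N) (fun u v => f u * w' N u v) t) atTop (𝓝 L) := by
  let w'' : ℕ → ℝ → ℝ → ℝ := fun N => if Even N then w N else w' N
  have heven (n : ℕ) : w'' (2 * n) = w (2 * n) := if_pos (even_two_mul n)
  have hodd (n : ℕ) : w'' (2 * n + 1) = w' (2 * n + 1) :=
    if_neg (Nat.not_even_two_mul_add_one n)
  have hw'' : ∀ N u v, u ≤ v → 0 ≤ w'' N u v := fun N u v huv => by
    simp only [w'']; split_ifs
    exacts [hw N u v huv, hw' N u v huv]
  have hQ'' (r : ℝ) : Tendsto (fun N => gridSum (G.T N) (w'' N) r) atTop (𝓝 (Q r)) :=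
    tendsto_of_tendsto_two_mul_of_tendsto_two_mul_add_one
      (by simpa only [Function.comp_def, heven] using (hQ r).comp tendsto_two_mul_atTop)
      (by simpa only [Function.comp_def, hodd] using (hQ' r).comp tendsto_two_mul_add_one_atTop)
  obtain ⟨L'', hL''⟩ := exists_tendsto_gridSum_mul hf hw'' hQ'' t
  obtain ⟨L', hL'⟩ := exists_tendsto_gridSum_mul hf hw' hQ' t
  have hL''L : L'' = L := tendsto_nhds_unique
    (by simpa only [Function.comp_def, heven] using hL''.comp tendsto_two_mul_atTop)
    (hL.comp tendsto_two_mul_atTop)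
  have hL''L' : L'' = L' := tendsto_nhds_unique
    (by simpa only [Function.comp_def, hodd] using hL''.comp tendsto_two_mul_add_one_atTop)
    (hL'.comp tendsto_two_mul_add_one_atTop)
  rwa [← hL''L', hL''L] at hL'

lemma abs_sub_le_of_tendsto_gridSum_mul {f : ℝ → ℝ} {w : ℕ → ℝ → ℝ → ℝ}
    (hw : ∀ N u v, u ≤ v → 0 ≤ w N u v) {Q L : ℝ → ℝ}
    (hQ : ∀ r, Tendsto (fun N => gridSum (G.T N) (w N) r) atTop (𝓝 (Q r)))
    (hL : ∀ r, Tendsto (fun N => gridSum (G.T N) (fun u v => f u * w N u v) r) atTop (𝓝 (L r)))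
    {b C : ℝ} (hC : ∀ x ∈ Icc 0 b, |f x| ≤ C) {s t : ℝ} (hs : s ∈ Icc 0 b) (ht : t ∈ Icc 0 b) :
    |L t - L s| ≤ C * |Q t - Q s| := by
  wlog hst : s ≤ t generalizing s t
  · rw [abs_sub_comm, abs_sub_comm (Q t)]
    exact this ht hs (le_of_not_ge hst)
  have hN (N : ℕ) := abs_gridSum_mul_sub_le N (hw N) (x := 0) (η := C) hst
    fun i _ hit => by
      simpa only [sub_zero] using
        hC _ ⟨G.T_nonneg N i, (G.T_lt_succ N i).le.trans (hit.trans ht.2)⟩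
  simp only [zero_mul, sub_zero] at hN
  calc |L t - L s| ≤ C * (Q t - Q s) :=
        le_of_tendsto_of_tendsto' ((hL t).sub (hL s)).abs (((hQ t).sub (hQ s)).const_mul C) hN
    _ ≤ C * |Q t - Q s| :=
        mul_le_mul_of_nonneg_left (le_abs_self _) ((abs_nonneg _).trans (hC s hs))

theorem continuousOn_of_tendsto_gridSum_mul {f : ℝ → ℝ} (hf : ContinuousOn f (Ici 0))
    {w : ℕ → ℝ → ℝ → ℝ} (hw : ∀ N u v, u ≤ v → 0 ≤ w N u v) {Q L : ℝ → ℝ}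
    (hQ : ∀ r, Tendsto (fun N => gridSum (G.T N) (w N) r) atTop (𝓝 (Q r)))
    (hQc : ContinuousOn Q (Ici 0))
    (hL : ∀ r, Tendsto (fun N => gridSum (G.T N) (fun u v => f u * w N u v) r) atTop (𝓝 (L r))) :
    ContinuousOn L (Ici 0) := by
  intro s hs
  obtain ⟨C, hC⟩ := isCompact_Icc.exists_bound_of_continuousOn
    (hf.mono (Icc_subset_Ici_self : Icc 0 (s + 1) ⊆ _))
  have hs' : s ∈ Icc 0 (s + 1) := ⟨hs, by linarith⟩
  have hnear : ∀ᶠ x in 𝓝[Ici 0] s, dist (L x) (L s) ≤ C * dist (Q x) (Q s) := by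
    filter_upwards [self_mem_nhdsWithin, nhdsWithin_le_nhds (Iio_mem_nhds (lt_add_one s))]
      with x hx0 hx1
    exact abs_sub_le_of_tendsto_gridSum_mul hw hQ hL (fun x hx => hC x hx) hs' ⟨hx0, hx1.le⟩
  refine tendsto_iff_dist_tendsto_zero.2 (squeeze_zero' (.of_forall fun _ => dist_nonneg) hnear ?_)
  simpa using (tendsto_iff_dist_tendsto_zero.1 (hQc s hs)).const_mul C

lemma convTo_of_abs_sub_le {g h w : ℝ → ℝ → ℝ} {t L Q : ℝ} (hh : ConvTo G h t L)
    (hw : ConvTo G w t Q)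
    (hgh : ∀ ε > 0, ∀ᶠ N in atTop, ∀ i, G.T N (i + 1) ≤ t →
      |g (G.T N i) (G.T N (i + 1)) - h (G.T N i) (G.T N (i + 1))|
        ≤ ε * w (G.T N i) (G.T N (i + 1))) :
    ConvTo G g t L := by
  suffices hdiff : Tendsto (fun N => gridSum (G.T N) g t - gridSum (G.T N) h t) atTop (𝓝 0) by
    simpa only [ConvTo, sub_add_cancel, zero_add] using hdiff.add hh
  refine Metric.tendsto_nhds.2 fun ε hε => ?_
  set B := |Q| + 1
  have hB0 : 0 < B := by positivity
  filter_upwards [hgh (ε / (2 * B)) (by positivity),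
    hw.eventually (gt_mem_nhds (show Q < B by linarith [le_abs_self Q]))] with N hN hwN
  rw [Real.dist_eq, sub_zero, gridSum_eq_sum_range, gridSum_eq_sum_range,
    ← Finset.sum_sub_distrib]
  calc _ ≤ ∑ i ∈ Finset.range (G.stepCount N t), ε / (2 * B) * w (G.T N i) (G.T N (i + 1)) :=
        (Finset.abs_sum_le_sum_abs _ _).trans
          (Finset.sum_le_sum fun i hi => hN i (lt_stepCount_iff.1 (Finset.mem_range.1 hi)))
    _ = ε / (2 * B) * gridSum (G.T N) w t := by rw [gridSum_eq_sum_range, Finset.mul_sum]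
    _ ≤ ε / (2 * B) * B := by gcongr
    _ < ε := by field_simp; linarith

lemma eventually_abs_sub_lt_of_continuousOn {X : ℝ → ℝ} {t : ℝ} (hX : ContinuousOn X (Icc 0 t))
    {ε : ℝ} (hε : 0 < ε) :
    ∀ᶠ N in atTop, ∀ i, G.T N (i + 1) ≤ t → |X (G.T N (i + 1)) - X (G.T N i)| < ε := by
  obtain ⟨δ, hδ, hXδ⟩ := Metric.uniformContinuousOn_iff.1
    (isCompact_Icc.uniformContinuousOn_of_continuous hX) ε hε
  obtain ⟨N₀, hN₀⟩ := G.mesh (δ / 2) (half_pos hδ)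
  refine eventually_atTop.2 ⟨N₀, fun N hN i hi => ?_⟩
  rw [← Real.dist_eq]
  refine hXδ _ ⟨G.T_nonneg N _, hi⟩ _ ⟨G.T_nonneg N i, (G.T_lt_succ N i).le.trans hi⟩ ?_
  rw [Real.dist_eq, abs_of_pos (sub_pos.2 (G.T_lt_succ N i))]
  linarith [hN₀ N hN i]

end GridSeq

namespace HasQV

variable {G : GridSeq} {X Q : ℝ → ℝ}

lemma monotone (hQ : HasQV G X Q) : Monotone Q := fun _ _ hst =>
  le_of_tendsto_of_tendsto' (hQ.2.2 _) (hQ.2.2 _) fun N =>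
    G.gridSum_mono N (fun _ _ _ => sq_nonneg _) hst

lemma convTo_sub (hQ : HasQV G X Q) (t : ℝ) : ConvTo G (fun u v => Q v - Q u) t (Q t) := by
  obtain ⟨hQc, hQ0, hXQ⟩ := hQ
  have htel (N : ℕ) : gridSum (G.T N) (fun u v => Q v - Q u) t = Q (G.T N (G.stepCount N t)) := by
    rw [GridSeq.gridSum_eq_sum_range, Finset.sum_range_sub (fun i => Q (G.T N i)), G.zero, hQ0,
      sub_zero]
  simp only [ConvTo, htel]
  rcases lt_or_ge t 0 with ht | ht
  · have hQt : Q t = 0 := tendsto_nhds_unique (hXQ t)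
      (by simpa only [GridSeq.gridSum_of_nonpos _ _ ht.le] using tendsto_const_nhds)
    simpa only [GridSeq.stepCount_eq_zero ht.le, G.zero, hQ0, hQt] using tendsto_const_nhds
  · exact (hQc t ht).tendsto.comp
      (tendsto_nhdsWithin_iff.2 ⟨G.tendsto_T_stepCount ht, .of_forall fun N => G.T_nonneg N _⟩)

end HasQV

lemma abs_log_sub_log_sub_div_le {m a b : ℝ} (hm : 0 < m) (ha : m ≤ a) (hb : m ≤ b) :
    |Real.log b - Real.log a - (b - a) / a| ≤ (b - a) ^ 2 / m ^ 2 := by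
  have ha0 : 0 < a := hm.trans_le ha
  have hb0 : 0 < b := hm.trans_le hb
  have hlog : Real.log b - Real.log a = Real.log (b / a) := (Real.log_div hb0.ne' ha0.ne').symm
  have hupper : Real.log (b / a) ≤ (b - a) / a := by
    have := Real.log_le_sub_one_of_pos (div_pos hb0 ha0)
    rwa [div_sub_one ha0.ne'] at this
  have hlower : (b - a) / a - (b - a) ^ 2 / (a * b) ≤ Real.log (b / a) := by
    have := Real.one_sub_inv_le_log_of_pos (div_pos hb0 ha0)
    convert this using 1
    field_simp
    ring
  have hab : (b - a) ^ 2 / (a * b) ≤ (b - a) ^ 2 / m ^ 2 := by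
    gcongr
    rw [sq]
    exact mul_le_mul ha hb hm.le ha0.le
  rw [hlog, abs_le]
  constructor <;> nlinarith [sq_nonneg (b - a), div_nonneg (sq_nonneg (b - a)) (sq_nonneg m)]

lemma abs_sq_log_sub_log_sub_le {m a b : ℝ} (hm : 0 < m) (ha : m ≤ a) (hb : m ≤ b)
    (hd : |b - a| ≤ 1) :
    |(Real.log b - Real.log a) ^ 2 - (a ^ 2)⁻¹ * (b - a) ^ 2|
      ≤ |b - a| * (1 / m ^ 4 + 2 / m ^ 3) * (b - a) ^ 2 := by
  have ha0 : 0 < a := hm.trans_le ha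
  set d := b - a
  set E := Real.log b - Real.log a - d / a
  have hE : |E| ≤ d ^ 2 / m ^ 2 := abs_log_sub_log_sub_div_le hm ha hb
  have hd2 : d ^ 2 ≤ |d| := by
    rw [← sq_abs]; nlinarith [abs_nonneg d]
  have hda : |2 * (d / a)| ≤ 2 * (|d| / m) := by
    rw [abs_mul, abs_two, abs_div, abs_of_pos ha0]; gcongr
  calc |(Real.log b - Real.log a) ^ 2 - (a ^ 2)⁻¹ * d ^ 2| = |E| * |E + 2 * (d / a)| := by
        rw [← abs_mul]; congr 1; simp only [E]; field_simp; ring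
    _ ≤ d ^ 2 / m ^ 2 * (|d| / m ^ 2 + 2 * (|d| / m)) := by
        gcongr
        exact (abs_add_le _ _).trans (add_le_add (hE.trans (by gcongr)) hda)
    _ = |d| * (1 / m ^ 4 + 2 / m ^ 3) * d ^ 2 := by field_simp

namespace GridSeq

variable {G : GridSeq}

lemma eventually_abs_sq_log_sub_le {S : ℝ → ℝ} (hS : ContinuousOn S (Ici 0))
    (hSpos : ∀ t ∈ Ici (0 : ℝ), 0 < S t) (t : ℝ) {ε : ℝ} (hε : 0 < ε) :
    ∀ᶠ N in atTop, ∀ i, G.T N (i + 1) ≤ t →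
      |(Real.log (S (G.T N (i + 1))) - Real.log (S (G.T N i))) ^ 2
          - ((S (G.T N i)) ^ 2)⁻¹ * (S (G.T N (i + 1)) - S (G.T N i)) ^ 2|
        ≤ ε * (S (G.T N (i + 1)) - S (G.T N i)) ^ 2 := by
  have hS' : ContinuousOn S (Icc 0 (max t 0)) := hS.mono Icc_subset_Ici_self
  obtain ⟨x₀, hx₀, hmin⟩ := isCompact_Icc.exists_isMinOn (nonempty_Icc.2 (le_max_right t 0)) hS'
  have hm : 0 < S x₀ := hSpos x₀ hx₀.1
  set K := 1 / S x₀ ^ 4 + 2 / S x₀ ^ 3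
  have hK : 0 < K := by positivity
  filter_upwards [eventually_abs_sub_lt_of_continuousOn hS' (lt_min one_pos (div_pos hε hK))]
    with N hN i hi
  have hi' : G.T N (i + 1) ≤ max t 0 := hi.trans (le_max_left _ _)
  have hd := hN i hi'
  refine (abs_sq_log_sub_log_sub_le hm
    (hmin ⟨G.T_nonneg N i, (G.T_lt_succ N i).le.trans hi'⟩) (hmin ⟨G.T_nonneg N _, hi'⟩)
    (hd.le.trans (min_le_left _ _))).trans ?_
  calc _ ≤ ε / K * K * (S (G.T N (i + 1)) - S (G.T N i)) ^ 2 := by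
        gcongr; exact hd.le.trans (min_le_right _ _)
    _ = _ := by field_simp

end GridSeq

/-- The Stieltjes integral `∫_0^t S_s⁻² d[S]_s` is expressed as the limit of its grid sums. -/
theorem stmt11 (G : GridSeq) (S QS : ℝ → ℝ)
    (hS : ContinuousOn S (Set.Ici 0)) (hSpos : ∀ t ∈ Set.Ici (0 : ℝ), 0 < S t)
    (hQS : HasQV G S QS) :
    ∃ QL : ℝ → ℝ, HasQV G (fun t => Real.log (S t)) QL ∧
      ∀ t, ConvTo G (fun u v => ((S u) ^ 2)⁻¹ * (QS v - QS u)) t (QL t) := by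
  have hf : ContinuousOn (fun x => ((S x) ^ 2)⁻¹) (Ici 0) :=
    (hS.pow 2).inv₀ fun x hx => pow_ne_zero 2 (hSpos x hx).ne'
  have hsq : ∀ (_ : ℕ) (u v : ℝ), u ≤ v → 0 ≤ (S v - S u) ^ 2 := fun _ _ _ _ => sq_nonneg _
  have hinc : ∀ (_ : ℕ) (u v : ℝ), u ≤ v → 0 ≤ QS v - QS u :=
    fun _ _ _ h => sub_nonneg.2 (hQS.monotone h)
  choose QL hQL using G.exists_tendsto_gridSum_mul hf hinc hQS.convTo_sub
  have hQL' (t : ℝ) : ConvTo G (fun u v => ((S u) ^ 2)⁻¹ * (S v - S u) ^ 2) t (QL t) :=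
    G.tendsto_gridSum_mul_of_tendsto hf hinc hsq hQS.convTo_sub hQS.2.2 (hQL t)
  refine ⟨QL, ⟨G.continuousOn_of_tendsto_gridSum_mul hf hsq hQS.2.2 hQS.1 hQL', ?_,
    fun t => ?_⟩, hQL⟩
  · exact tendsto_nhds_unique (hQL' 0)
      (by simpa only [G.gridSum_of_nonpos _ _ le_rfl] using tendsto_const_nhds)
  · exact G.convTo_of_abs_sub_le (hQL' t) (hQS.2.2 t) fun ε hε =>
      G.eventually_abs_sq_log_sub_le hS hSpos t hε
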